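/- Let K, X be compact metric spaces and φ : K × X → ℝ continuous. Suppose μ₀ is a Borel probability measure on K and C > 0 such that ∫_K φ(f, x) dμ₀(f) > C for all x ∈ X. Then there is a weak-* open neighborhood V of μ₀ in the space of Borel probability measures on K such that every ρ ∈ V satisfies ∫_K φ(f, x) dρ(f) > C/2 for all x ∈ X. -/
import Mathlib


open MeasureTheory Topology

/-- If `φ : K × X → ℝ` is continuous on a product of compact metric spaces, `μ₀` is a
Borel probability measure on `K` with `∫ φ(f, x) dμ₀(f) > C` for all `x`, then there is a
weak-* open neighborhood `V` of `μ₀` in the probability measures on `K` such that every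
`ρ ∈ V` satisfies `∫ φ(f, x) dρ(f) > C/2` for all `x`. -/
theorem uniform_expansion_open
    {K X : Type*} [MetricSpace K] [CompactSpace K] [MeasurableSpace K] [BorelSpace K]
    [MetricSpace X] [CompactSpace X]
    (φ : K × X → ℝ) (hφ : Continuous φ) (C : ℝ) (hC : 0 < C)
    (μ₀ : ProbabilityMeasure K)
    (hμ₀ : ∀ x : X, C < ∫ f, φ (f, x) ∂(μ₀ : Measure K)) :
    ∃ V : Set (ProbabilityMeasure K), IsOpen V ∧ μ₀ ∈ V ∧
      ∀ ρ ∈ V, ∀ x : X, C / 2 < ∫ f, φ (f, x) ∂(ρ : Measure K) := by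
  -- uniform continuity of φ
  have hUC : UniformContinuous φ := CompactSpace.uniformContinuous_of_continuous hφ
  obtain ⟨δ, hδpos, hδ⟩ := Metric.uniformContinuous_iff.mp hUC (C / 4) (by linarith)
  -- finite cover of X by δ-balls
  have hcover : (Set.univ : Set X) ⊆ ⋃ x : X, Metric.ball x δ := by
    intro x _; exact Set.mem_iUnion.mpr ⟨x, Metric.mem_ball_self hδpos⟩
  obtain ⟨t, ht⟩ := isCompact_univ.elim_finite_subcover
    (fun x : X => Metric.ball x δ) (fun x => Metric.isOpen_ball) hcover
  -- for each x, the slice as a bounded continuous function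
  let g : X → BoundedContinuousFunction K ℝ := fun x =>
    BoundedContinuousFunction.mkOfCompact ⟨fun f => φ (f, x), hφ.comp (by continuity)⟩
  have hg : ∀ x (ρ : ProbabilityMeasure K),
      ∫ f, (g x) f ∂(ρ : Measure K) = ∫ f, φ (f, x) ∂(ρ : Measure K) := by
    intro x ρ; rfl
  -- the open set
  refine ⟨⋂ x ∈ t, {ρ : ProbabilityMeasure K | 3 * C / 4 < ∫ f, (g x) f ∂(ρ : Measure K)},
    ?_, ?_, ?_⟩
  · refine isOpen_biInter_finset fun x _ => ?_
    exact isOpen_Ioi.preimage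
      (ProbabilityMeasure.continuous_integral_boundedContinuousFunction (g x))
  · refine Set.mem_iInter₂.mpr fun x _ => ?_
    have := hμ₀ x
    simp only [Set.mem_setOf_eq, hg]
    linarith
  · intro ρ hρ x
    have hx : x ∈ ⋃ x ∈ t, Metric.ball x δ := ht (Set.mem_univ x)
    obtain ⟨y, hyt, hxy⟩ := Set.mem_iUnion₂.mp hx
    have hρy : 3 * C / 4 < ∫ f, φ (f, y) ∂(ρ : Measure K) := by
      have := Set.mem_iInter₂.mp hρ y hyt
      simpa [hg] using this
    -- pointwise comparison
    have hpt : ∀ f : K, φ (f, y) - C / 4 ≤ φ (f, x) := by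
      intro f
      have hd : dist ((f, x) : K × X) (f, y) < δ := by
        rw [Prod.dist_eq]
        simp only [dist_self]
        exact max_lt hδpos (by simpa [Metric.mem_ball] using hxy)
      have := hδ hd
      rw [Real.dist_eq] at this
      have := abs_lt.mp this
      linarith [this.1]
    have hint1 : Integrable (fun f => φ (f, x)) (ρ : Measure K) := (g x).integrable _
    have hint2 : Integrable (fun f => φ (f, y)) (ρ : Measure K) := (g y).integrable _
    have hmono : ∫ f, (φ (f, y) - C / 4) ∂(ρ : Measure K)
        ≤ ∫ f, φ (f, x) ∂(ρ : Measure K) :=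
      integral_mono (hint2.sub (integrable_const _)) hint1 hpt
    have hsub : ∫ f, (φ (f, y) - C / 4) ∂(ρ : Measure K)
        = (∫ f, φ (f, y) ∂(ρ : Measure K)) - C / 4 := by
      rw [integral_sub hint2 (integrable_const _), integral_const]
      simp
    rw [hsub] at hmono
    linarith
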